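/- If G is an almost bipartite non-König–Egerváry graph, then every maximum matching of G contains at least one edge belonging to its unique odd cycle. -/

import Mathlib

open SimpleGraph

universe u

variable {V : Type u}

/-- `S` is an independent set of `G`. -/
def IsIndep (G : SimpleGraph V) (S : Set V) : Prop :=
  ∀ ⦃u⦄, u ∈ S → ∀ ⦃v⦄, v ∈ S → ¬ G.Adj u v

/-- The neighborhood `N(S)` of a vertex set. -/
def NSet (G : SimpleGraph V) (S : Set V) : Set V := {v | ∃ u ∈ S, G.Adj u v}

/-- `S` is a maximum independent set of `G`. -/
def IsMaxIndep (G : SimpleGraph V) (S : Set V) : Prop :=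
  IsIndep G S ∧ ∀ T : Set V, IsIndep G T → T.ncard ≤ S.ncard

/-- The independence number `α(G)`. -/
noncomputable def indepNum (G : SimpleGraph V) : ℕ :=
  sSup {n | ∃ S : Set V, IsIndep G S ∧ S.ncard = n}

/-- `core(G)`: intersection of all maximum independent sets. -/
def core (G : SimpleGraph V) : Set V := ⋂₀ {S | IsMaxIndep G S}

/-- `corona(G)`: union of all maximum independent sets. -/
def corona (G : SimpleGraph V) : Set V := ⋃₀ {S | IsMaxIndep G S}

/-- The difference `d_G(S) = |S| - |N(S)|`, as an integer. -/
noncomputable def diffZ (G : SimpleGraph V) (S : Set V) : ℤ :=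
  (S.ncard : ℤ) - ((NSet G S).ncard : ℤ)

/-- `S` is a critical independent set: independent and maximizing `|S| - |N(S)|`
among independent sets. -/
def IsCriticalIndep (G : SimpleGraph V) (S : Set V) : Prop :=
  IsIndep G S ∧ ∀ T : Set V, IsIndep G T → diffZ G T ≤ diffZ G S

/-- `ker(G)`: intersection of all critical independent sets. -/
def kerSet (G : SimpleGraph V) : Set V := ⋂₀ {S | IsCriticalIndep G S}

/-- `M` is a maximum matching of `G`. -/
def IsMaxMatching (G : SimpleGraph V) (M : G.Subgraph) : Prop :=
  M.IsMatching ∧ ∀ M' : G.Subgraph, M'.IsMatching → M'.edgeSet.ncard ≤ M.edgeSet.ncard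

/-- The matching number `μ(G)`. -/
noncomputable def matchNum (G : SimpleGraph V) : ℕ :=
  sSup {n | ∃ M : G.Subgraph, M.IsMatching ∧ M.edgeSet.ncard = n}

/-- `D(G)`: vertices missed by some maximum matching. -/
def DSet (G : SimpleGraph V) : Set V :=
  {v | ∃ M : G.Subgraph, IsMaxMatching G M ∧ v ∉ M.verts}

/-- `C` is the vertex set of an odd cycle of `G`. -/
def IsOddCycle (G : SimpleGraph V) (C : Set V) : Prop :=
  ∃ (u : V) (w : G.Walk u u), w.IsCycle ∧ Odd w.length ∧ ∀ v, v ∈ w.support ↔ v ∈ C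

/-- An edge list is `M`-alternating: consecutive edges, exactly one in `M`. -/
def Alternating (G : SimpleGraph V) (M : G.Subgraph) (l : List (Sym2 V)) : Prop :=
  List.Chain' (fun e f => (e ∈ M.edgeSet ↔ f ∉ M.edgeSet)) l

/-- `w` is an `M`-blossom with base `b`: an odd cycle, alternating, whose two
edges at the base are unmatched (so it carries `⌊length/2⌋` matched edges). -/
structure IsBlossom (G : SimpleGraph V) (M : G.Subgraph) (b : V) (w : G.Walk b b) : Prop where
  cyc : w.IsCycle
  odd : Odd w.length
  alt : Alternating G M w.edges
  first : ∀ e ∈ w.edges.head?, e ∉ M.edgeSet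
  last : ∀ e ∈ w.edges.getLast?, e ∉ M.edgeSet

/-- `p` is an `M`-stem from base `b` to root `r`: an even alternating path
starting (if nonempty) with a matched edge, whose root is `M`-unsaturated. -/
structure IsStem (G : SimpleGraph V) (M : G.Subgraph) (b r : V) (p : G.Walk b r) : Prop where
  path : p.IsPath
  even : Even p.length
  alt : Alternating G M p.edges
  first : ∀ e ∈ p.edges.head?, e ∈ M.edgeSet
  root : r ∉ M.verts

/-- `F` is the vertex set of an `M`-flower of `G` whose blossom has vertex set `C`. -/
def IsFlowerOn (G : SimpleGraph V) (M : G.Subgraph) (C F : Set V) : Prop :=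
  ∃ (b r : V) (w : G.Walk b b) (p : G.Walk b r),
    IsBlossom G M b w ∧ IsStem G M b r p ∧
    (∀ v, v ∈ w.support ↔ v ∈ C) ∧
    (∀ v, v ∈ p.support → v ∈ w.support → v = b) ∧
    F = {v | v ∈ w.support ∨ v ∈ p.support}

/-- The reach set `R(C)` of an odd cycle `C`: union of the vertex sets of all
`M`-flowers with blossom `C`, over all maximum matchings `M`. -/
def reach (G : SimpleGraph V) (C : Set V) : Set V :=
  ⋃₀ {F | ∃ M : G.Subgraph, IsMaxMatching G M ∧ IsFlowerOn G M C F}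

/-- `G` is `R`-disjoint: it has an odd cycle, every odd cycle has nonempty reach
set, and reach sets of distinct odd cycles are disjoint. -/
def RDisjoint (G : SimpleGraph V) : Prop :=
  (∃ C : Set V, IsOddCycle G C) ∧
  (∀ C : Set V, IsOddCycle G C → (reach G C).Nonempty) ∧
  (∀ C C' : Set V, IsOddCycle G C → IsOddCycle G C' → C ≠ C' →
    reach G C ∩ reach G C' = ∅)

/-- `B(G) = V(G) \ ⋃_C R(C)`. -/
def bipartPart (G : SimpleGraph V) : Set V :=
  {v | ∀ C : Set V, IsOddCycle G C → v ∉ reach G C}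

/-- `G` is bipartite: its vertex set splits into two independent sets. -/
def IsBipartiteGraph (G : SimpleGraph V) : Prop :=
  ∃ A B : Set V, (∀ v, v ∈ A ∨ v ∈ B) ∧ A ∩ B = ∅ ∧ IsIndep G A ∧ IsIndep G B

/-- `G` is almost bipartite: it has exactly one odd cycle. -/
def AlmostBipartite (G : SimpleGraph V) : Prop := ∃! C : Set V, IsOddCycle G C

/-- `G` is a König–Egerváry graph: `α(G) + μ(G) = |V(G)|`. -/
def IsKE {W : Type*} (G : SimpleGraph W) : Prop :=
  _root_.indepNum G + matchNum G = Nat.card W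

/-!
Suppose a maximum matching `M` has no edge inside the unique odd cycle `C`. Then no odd cycle
carries an edge of `M`, and alternating walks from `M`-exposed vertices behave as in a bipartite
graph: no vertex is the end of both an even and an odd alternating walk, since joining them would
give an augmenting path or an odd cycle through an edge of `M`.

Because `α(G) + μ(G) < |V|`, every vertex `v` of `C` is missed by some maximum matching: deleting
the edges at `v` leaves a graph without odd cycles, and König's theorem there yields a matching of
size `μ(G)` avoiding `v`. Comparing it with `M` through their symmetric difference shows that `v`
ends an even alternating walk. So the vertices that no alternating walk reaches span a bipartite
graph, and the ends of even alternating walks together with one of its colour classes form an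
independent set `S` with `|S| + |M| = |V|`: `G` is König–Egerváry after all.
-/

namespace SimpleGraph.Walk

variable {G : SimpleGraph V}

theorem exists_eq_append_append_of_not_nodup {u v : V} (w : G.Walk u v)
    (h : ¬ w.support.Nodup) :
    ∃ (x : V) (w₁ : G.Walk u x) (L : G.Walk x x) (w₂ : G.Walk x v),
      w = w₁.append (L.append w₂) ∧ 0 < L.length := by
  classical
  induction w with
  | nil => simp at h
  | @cons u b v hub p ih =>
    by_cases hu : u ∈ p.support
    · refine ⟨u, nil, cons hub (p.takeUntil u hu), p.dropUntil u hu, ?_, by simp⟩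
      conv_lhs => rw [← p.take_spec hu]
      rfl
    · obtain ⟨x, w₁, L, w₂, rfl, hL⟩ := ih (by simpa [hu] using h)
      exact ⟨x, cons hub w₁, L, w₂, rfl, hL⟩

/-- Cutting an odd closed walk at a repeated vertex leaves two shorter closed walks, one of them
odd. -/
theorem exists_odd_isCycle {P : List (Sym2 V) → Prop}
    (of_infix : ∀ l₁ l l₂, P (l₁ ++ (l ++ l₂)) → P l)
    (of_even_infix : ∀ l₁ l l₂, Even l.length → P (l₁ ++ (l ++ l₂)) → P (l₁ ++ l₂))
    {u : V} (w : G.Walk u u) (hodd : Odd w.length) (hP : P w.edges) :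
    ∃ (v : V) (c : G.Walk v v), c.IsCycle ∧ Odd c.length ∧ P c.edges := by
  induction hn : w.length using Nat.strong_induction_on generalizing u w with
  | _ n ih =>
  cases w with
  | nil => simp at hodd
  | @cons u x _ hux p =>
    by_cases hp : p.IsPath
    · refine ⟨u, cons hux p, isCycle_iff_isPath_tail_and_le_length.2 ⟨by simpa using hp, ?_⟩,
        hodd, hP⟩
      cases p with
      | nil => exact absurd hux (G.loopless.irrefl u)
      | cons _ q =>
        cases q with
        | nil => simp_all [Nat.odd_iff]
        | cons _ _ => simp only [length_cons]; omega
    · obtain ⟨y, w₁, L, w₂, rfl, hL⟩ :=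
        p.exists_eq_append_append_of_not_nodup (by rwa [← isPath_def])
      simp only [length_cons, length_append] at hn hodd
      rw [edges_cons, edges_append, edges_append, ← List.cons_append] at hP
      rcases Nat.even_or_odd L.length with hLe | hLo
      · refine ih _ (by simp; omega) ((cons hux w₁).append w₂) ?_ ?_ rfl
        · simpa [Nat.odd_add, Nat.odd_add_one, Nat.even_add, hLe] using hodd
        · simpa using of_even_infix _ _ _ (by simpa using hLe) hP
      · exact ih _ (by omega) L hLo (of_infix _ _ _ hP) rfl

theorem exists_odd_isCycle_of_odd {u : V} (w : G.Walk u u) (hodd : Odd w.length) :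
    ∃ (v : V) (c : G.Walk v v), c.IsCycle ∧ Odd c.length :=
  let ⟨v, c, hc, hco, _⟩ := exists_odd_isCycle (P := fun _ => True) (by simp) (by simp) w hodd ⟨⟩
  ⟨v, c, hc, hco⟩

end SimpleGraph.Walk

theorem SimpleGraph.colorable_two_of_forall_isCycle {G : SimpleGraph V}
    (h : ∀ (u : V) (c : G.Walk u u), c.IsCycle → ¬ Odd c.length) : G.Colorable 2 :=
  two_colorable_iff_forall_loop_even.2 fun _ w => Nat.not_odd_iff_even.1 fun hw =>
    let ⟨_, c, hc, hco⟩ := w.exists_odd_isCycle_of_odd hw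
    h _ c hc hco

theorem SimpleGraph.colorable_two_induce_of_forall_isCycle {G : SimpleGraph V} {U : Set V}
    (h : ∀ ⦃u : V⦄ (c : G.Walk u u), c.IsCycle → Odd c.length → ∃ v ∈ c.support, v ∉ U) :
    (G.induce U).Colorable 2 :=
  colorable_two_of_forall_isCycle fun _ c hc hodd => by
    obtain ⟨v, hv, hvU⟩ := h (c.map (Embedding.induce (G := G) U).toHom)
      (hc.map (Embedding.induce (G := G) U).injective) (by rwa [Walk.length_map])
    rw [Walk.support_map] at hv
    obtain ⟨v, -, rfl⟩ := List.mem_map.1 hv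
    exact hvU v.2

namespace Alternating

variable {G : SimpleGraph V} {M : G.Subgraph} {l l₁ l₂ : List (Sym2 V)}

theorem getLast_mem_iff (h : Alternating G M l) (hl : l ≠ []) :
    l.getLast hl ∈ M.edgeSet ↔ (l.head hl ∈ M.edgeSet ↔ Odd l.length) := by
  induction l with
  | nil => contradiction
  | cons a t ih =>
    cases t with
    | nil => simp
    | cons b t =>
      obtain ⟨hab, ht⟩ := List.isChain_cons_cons.1 h
      have := ih ht (List.cons_ne_nil _ _)
      simp only [List.getLast_cons_cons, List.head_cons, List.length_cons,
        Nat.odd_add_one] at this ⊢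
      tauto

theorem of_isInfix (h : Alternating G M l) (h' : l₁ <:+: l) : Alternating G M l₁ :=
  List.IsChain.infix h h'

theorem append_of_even (h : Alternating G M (l₁ ++ (l ++ l₂))) (hl : Even l.length) :
    Alternating G M (l₁ ++ l₂) := by
  obtain rfl | hne := eq_or_ne l []
  · simpa using h
  obtain ⟨h₁, hl₂, hjoin₁⟩ := List.isChain_append.1 h
  obtain ⟨hL, h₂, hjoin₂⟩ := List.isChain_append.1 hl₂
  have hpar := getLast_mem_iff (G := G) hL hne
  refine List.isChain_append.2 ⟨h₁, h₂, fun x hx y hy => ?_⟩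
  have hx' := hjoin₁ x hx (l.head hne) (by simp [List.head?_append, List.head?_eq_some_head hne])
  have hy' := hjoin₂ (l.getLast hne) (List.getLast?_eq_some_getLast hne) y hy
  rw [← Nat.not_odd_iff_even] at hl
  tauto

theorem exists_mem_edgeSet (h : Alternating G M l) (hl : 2 ≤ l.length) :
    ∃ e ∈ l, e ∈ M.edgeSet := by
  match l, hl with
  | a :: b :: t, _ =>
    by_cases ha : a ∈ M.edgeSet
    · exact ⟨a, by simp, ha⟩
    · exact ⟨b, by simp, by have := (List.isChain_cons_cons.1 h).1; tauto⟩

theorem reverse (h : Alternating G M l) : Alternating G M l.reverse :=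
  List.isChain_reverse.2 <| h.imp fun _ _ hab => by tauto

theorem congr {N : G.Subgraph} (h : Alternating G M l)
    (hMN : ∀ e ∈ l, e ∈ M.edgeSet ↔ e ∈ N.edgeSet) : Alternating G N l := by
  induction l with
  | nil => exact List.isChain_nil
  | cons a t ih =>
    cases t with
    | nil => exact List.isChain_singleton a
    | cons b t =>
      obtain ⟨hab, ht⟩ := List.isChain_cons_cons.1 h
      refine List.isChain_cons_cons.2 ⟨?_, ih ht fun e he => hMN e (List.mem_cons_of_mem _ he)⟩
      have := hMN a (by simp)
      have := hMN b (by simp)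
      tauto

theorem getLast_mem_iff_even {r v : V} {w : G.Walk r v} (hr : r ∉ M.verts)
    (h : Alternating G M w.edges) {e : Sym2 V} (he : e ∈ w.edges.getLast?) :
    e ∈ M.edgeSet ↔ Even w.length := by
  obtain ⟨hne, rfl⟩ := List.mem_getLast?_eq_getLast he
  have hhead : w.edges.head hne ∉ M.edgeSet := by
    cases w with
    | nil => contradiction
    | cons hadj p => exact fun hm => hr (M.edge_vert (by simpa using hm))
  rw [h.getLast_mem_iff hne, Walk.length_edges, ← Nat.not_odd_iff_even]
  tauto

theorem concat {r v x : V} {w : G.Walk r v} (hr : r ∉ M.verts) (h : Alternating G M w.edges)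
    (hvx : G.Adj v x) (he : s(v, x) ∈ M.edgeSet ↔ Odd w.length) :
    Alternating G M (w.concat hvx).edges := by
  rw [Walk.edges_concat, List.concat_eq_append]
  refine List.isChain_append.2 ⟨h, List.isChain_singleton _, fun y hy z hz => ?_⟩
  obtain rfl : s(v, x) = z := by simpa using hz
  rw [h.getLast_mem_iff_even hr hy, ← Nat.not_odd_iff_even]
  tauto

end Alternating

namespace SimpleGraph.Subgraph.IsMatching

variable {G : SimpleGraph V} {M : G.Subgraph} {v₁ v₂ : V}

theorem not_mem_pair_of_adj (hM : M.IsMatching) (h12 : M.Adj v₁ v₂) {x y : V}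
    (hxy : M.Adj x y) (hx : x ∉ ({v₁, v₂} : Set V)) : y ∉ ({v₁, v₂} : Set V) := by
  rintro (rfl | rfl)
  · exact hx (.inr (hM.eq_of_adj_right hxy h12.symm))
  · exact hx (.inl (hM.eq_of_adj_right hxy h12))

theorem deleteVerts_pair (hM : M.IsMatching) (h12 : M.Adj v₁ v₂) :
    (M.deleteVerts {v₁, v₂}).IsMatching := by
  rintro x ⟨hxM, hx12⟩
  obtain ⟨y, hxy, huniq⟩ := hM hxM
  refine ⟨y, ?_, fun y' hy' => huniq y' (Subgraph.deleteVerts_adj.1 hy').2.2.2.2⟩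
  exact Subgraph.deleteVerts_adj.2
    ⟨hxM, hx12, M.edge_vert hxy.symm, hM.not_mem_pair_of_adj h12 hxy hx12, hxy⟩

theorem edgeSet_deleteVerts_pair (hM : M.IsMatching) (h12 : M.Adj v₁ v₂) :
    (M.deleteVerts {v₁, v₂}).edgeSet = M.edgeSet \ {s(v₁, v₂)} := by
  ext e
  induction e using Sym2.ind with
  | _ x y =>
    simp only [Subgraph.mem_edgeSet, Subgraph.deleteVerts_adj, Set.mem_sdiff, Set.mem_singleton_iff]
    constructor
    · rintro ⟨-, hx, -, -, hxy⟩
      refine ⟨hxy, fun h => hx ?_⟩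
      rcases Sym2.eq_iff.1 h with ⟨rfl, -⟩ | ⟨rfl, -⟩ <;> simp
    · rintro ⟨hxy, hne⟩
      have hx : x ∉ ({v₁, v₂} : Set V) := by
        rintro (rfl | rfl)
        · exact hne (by rw [hM.eq_of_adj_left hxy h12])
        · exact hne (by rw [hM.eq_of_adj_left hxy h12.symm, Sym2.eq_swap])
      exact ⟨M.edge_vert hxy, hx, M.edge_vert hxy.symm, hM.not_mem_pair_of_adj h12 hxy hx, hxy⟩

variable [Finite V]

theorem ncard_edgeSet_le (hM : M.IsMatching) {T : Set V}
    (hT : ∀ ⦃x y : V⦄, M.Adj x y → x ∈ T ∨ y ∈ T) : M.edgeSet.ncard ≤ T.ncard := by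
  choose! p hp using fun v (hv : v ∈ M.verts) => (hM hv).exists
  have hsub : M.edgeSet ⊆ (fun v => s(v, p v)) '' T := by
    intro e he
    induction e using Sym2.ind with
    | _ x y =>
      rcases hT he with hx | hy
      · exact ⟨x, hx, by dsimp only; rw [hM.eq_of_adj_left (hp x (M.edge_vert he)) he]⟩
      · refine ⟨y, hy, ?_⟩
        dsimp only
        rw [hM.eq_of_adj_left (hp y (M.edge_vert he.symm)) he.symm, Sym2.eq_swap]
  exact (Set.ncard_le_ncard hsub).trans Set.ncard_image_le

theorem ncard_edgeSet_eq (hM : M.IsMatching) {T : Set V} (hTM : T ⊆ M.verts)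
    (hT : ∀ ⦃x y : V⦄, M.Adj x y → (x ∈ T ↔ y ∉ T)) : M.edgeSet.ncard = T.ncard := by
  refine (hM.ncard_edgeSet_le fun x y hxy => ?_).antisymm ?_
  · by_cases hx : x ∈ T
    · exact .inl hx
    · exact .inr (by have := hT hxy; tauto)
  choose! p hp using fun v (hv : v ∈ T) => (hM (hTM hv)).exists
  refine Set.ncard_le_ncard_of_injOn (fun v => s(v, p v)) (fun v hv => hp v hv) ?_
  intro v hv v' hv' hvv'
  rcases Sym2.eq_iff.1 hvv' with ⟨h, -⟩ | ⟨h, h'⟩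
  · exact h
  · have hadj : M.Adj v' v := h ▸ hp v' hv'
    exact absurd hv ((hT hadj).1 hv')

end SimpleGraph.Subgraph.IsMatching

def AvoidsOddCycles {G : SimpleGraph V} (M : G.Subgraph) : Prop :=
  ∀ ⦃u : V⦄ (c : G.Walk u u), c.IsCycle → Odd c.length → ∀ e ∈ c.edges, e ∉ M.edgeSet

namespace IsMaxMatching

variable {G : SimpleGraph V} {M : G.Subgraph}

theorem exists_exchange (hM : IsMaxMatching G M) {a v₁ v₂ : V} (h12 : M.Adj v₁ v₂)
    (ha1 : G.Adj a v₁) (ha : a ∉ M.verts) :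
    ∃ N : G.Subgraph, IsMaxMatching G N ∧ N.verts = insert a (M.verts \ {v₂}) ∧
      N.edgeSet = insert s(a, v₁) (M.edgeSet \ {s(v₁, v₂)}) := by
  have hdisj : Disjoint (M.deleteVerts {v₁, v₂}).support (G.subgraphOfAdj ha1).support := by
    rw [support_subgraphOfAdj, Set.disjoint_right]
    rintro v (rfl | rfl) hv <;> have := Subgraph.support_subset_verts _ hv
    · exact ha this.1
    · exact this.2 (.inl rfl)
  have hE : (M.deleteVerts {v₁, v₂} ⊔ G.subgraphOfAdj ha1).edgeSet =
      insert s(a, v₁) (M.edgeSet \ {s(v₁, v₂)}) := by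
    rw [Subgraph.edgeSet_sup, hM.1.edgeSet_deleteVerts_pair h12, edgeSet_subgraphOfAdj,
      Set.union_singleton]
  refine ⟨_, ⟨(hM.1.deleteVerts_pair h12).sup (.subgraphOfAdj ha1) hdisj, fun N hN => ?_⟩, ?_, hE⟩
  · have hnew : s(a, v₁) ∉ M.edgeSet := fun h => ha (M.edge_vert h)
    rw [hE, Set.ncard_exchange hnew (Subgraph.mem_edgeSet.2 h12)]
    exact hM.2 N hN
  · ext v
    have h1 : v₁ ∈ M.verts := M.edge_vert h12
    have h12' : v₁ ≠ v₂ := G.ne_of_adj (M.adj_sub h12)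
    simp only [Subgraph.verts_sup, Subgraph.deleteVerts_verts, subgraphOfAdj_verts,
      Set.mem_union, Set.mem_sdiff, Set.mem_insert_iff, Set.mem_singleton_iff]
    grind

variable [Finite V]

theorem not_adj (hM : IsMaxMatching G M) {a b : V} (ha : a ∉ M.verts) (hb : b ∉ M.verts) :
    ¬ G.Adj a b := by
  intro hab
  have hdisj : Disjoint M.support (G.subgraphOfAdj hab).support := by
    rw [support_subgraphOfAdj, Set.disjoint_right]
    rintro v (rfl | rfl) hv <;> exact ‹_ ∉ M.verts› (M.support_subset_verts hv)
  have hnew : s(a, b) ∉ M.edgeSet := fun h => ha (M.edge_vert h)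
  have := hM.2 _ (hM.1.sup (.subgraphOfAdj hab) hdisj)
  rw [Subgraph.edgeSet_sup, edgeSet_subgraphOfAdj, Set.union_singleton,
    Set.ncard_insert_of_notMem hnew] at this
  omega


theorem no_augmenting_path : ∀ {M : G.Subgraph} {a b : V} (w : G.Walk a b),
    IsMaxMatching G M → w.IsPath → Odd w.length → Alternating G M w.edges →
    a ∉ M.verts → b ∉ M.verts → False
  | _, _, _, .nil, _, _, hodd, _, _, _ => by simp at hodd
  | _, _, _, .cons hab .nil, hM, _, _, _, ha, hb => hM.not_adj ha hb hab
  | M, a, b, .cons (v := v₁) ha1 (.cons (v := v₂) h12 w), hM, hp, hodd, halt, ha, hb => by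
    have hM12 : M.Adj v₁ v₂ := by
      have := (List.isChain_cons_cons.1 halt).1
      have ha1M : s(a, v₁) ∉ M.edgeSet := fun h => ha (M.edge_vert h)
      tauto
    obtain ⟨N, hN, hNv, hNe⟩ := hM.exists_exchange hM12 ha1 ha
    simp only [Walk.cons_isPath_iff, Walk.support_cons, List.mem_cons, not_or] at hp
    obtain ⟨⟨hw, hv₁w⟩, -, haw⟩ := hp
    have hsame : ∀ e ∈ w.edges, e ∈ M.edgeSet ↔ e ∈ N.edgeSet := by
      intro e he
      have hne₁ : e ≠ s(a, v₁) := by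
        rintro rfl; exact haw (w.fst_mem_support_of_mem_edges he)
      have hne₂ : e ≠ s(v₁, v₂) := by
        rintro rfl; exact hv₁w (w.fst_mem_support_of_mem_edges he)
      simp [hNe, hne₁, hne₂]
    refine no_augmenting_path w hN hw ?_ ?_ ?_ ?_
    · simpa [Nat.odd_add_one] using hodd
    · have halt' : Alternating G M w.edges := halt.of_isInfix ⟨[s(a, v₁), s(v₁, v₂)], [], by simp⟩
      exact halt'.congr hsame
    · have hv₂a : v₂ ≠ a := fun h => haw (h ▸ w.start_mem_support)
      simp [hNv, hv₂a]
    · have hba : b ≠ a := fun h => haw (h ▸ w.end_mem_support)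
      simp [hNv, hba, hb]

/-- The odd alternating walk is shortened by removing even closed subwalks until it is a path,
unless an odd closed subwalk appears; that one contains an odd cycle alternating with `M`. -/
theorem no_odd_alternating_walk {M : G.Subgraph} (hM : IsMaxMatching G M)
    (hC : AvoidsOddCycles M) {a b : V} (w : G.Walk a b) (hodd : Odd w.length)
    (halt : Alternating G M w.edges) (ha : a ∉ M.verts) (hb : b ∉ M.verts) : False := by
  induction hn : w.length using Nat.strong_induction_on generalizing w with
  | _ n ih =>
  by_cases hp : w.IsPath
  · exact hM.no_augmenting_path w hp hodd halt ha hb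
  obtain ⟨x, w₁, L, w₂, rfl, hL⟩ :=
    w.exists_eq_append_append_of_not_nodup (by rwa [← Walk.isPath_def])
  simp only [Walk.length_append] at hn hodd
  rw [Walk.edges_append, Walk.edges_append] at halt
  rcases Nat.even_or_odd L.length with hLe | hLo
  · refine ih _ (by simp; omega) (w₁.append w₂) ?_ ?_ rfl
    · simpa [Nat.odd_add, Nat.even_add, hLe] using hodd
    · simpa using halt.append_of_even (by simpa using hLe)
  · obtain ⟨v, c, hc, hco, hcalt⟩ := Walk.exists_odd_isCycle (P := Alternating G M)
      (fun l₁ l l₂ h => h.of_isInfix ⟨l₁, l₂, by simp⟩) (fun _ _ _ he h => h.append_of_even he)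
      L hLo (halt.of_isInfix ⟨w₁.edges, w₂.edges, by simp⟩)
    obtain ⟨e, he, heM⟩ :=
      hcalt.exists_mem_edgeSet (by simpa using hc.three_le_length.trans' (by norm_num))
    exact hC c hc hco e he heM

end IsMaxMatching

/-- `AltReach M false v` (resp. `AltReach M true v`): some `M`-alternating walk of even
(resp. odd) length leads from an `M`-exposed vertex to `v`. -/
inductive AltReach {G : SimpleGraph V} (M : G.Subgraph) : Bool → V → Prop
  | exposed {v : V} : v ∉ M.verts → AltReach M false v
  | unmatched {u v : V} : AltReach M false u → G.Adj u v → s(u, v) ∉ M.edgeSet → AltReach M true v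
  | matched {u v : V} : AltReach M true u → M.Adj u v → AltReach M false v

namespace AltReach

variable {G : SimpleGraph V} {M : G.Subgraph}

theorem exists_walk {b : Bool} {v : V} (h : AltReach M b v) :
    ∃ (r : V) (w : G.Walk r v), r ∉ M.verts ∧ Alternating G M w.edges ∧ (Odd w.length ↔ b) := by
  induction h with
  | exposed hv => exact ⟨_, .nil, hv, List.isChain_nil, by simp⟩
  | unmatched _ huv huvM ih =>
    obtain ⟨r, w, hr, halt, hlen⟩ := ih
    refine ⟨r, w.concat huv, hr, halt.concat hr huv ?_, ?_⟩ <;>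
      simp_all
  | matched _ huv ih =>
    obtain ⟨r, w, hr, halt, hlen⟩ := ih
    refine ⟨r, w.concat (M.adj_sub huv), hr, halt.concat hr _ ?_, ?_⟩ <;>
      simp_all

theorem odd_of_adj (hM : M.IsMatching) {u v : V} (hu : AltReach M false u) (huv : G.Adj u v) :
    AltReach M true v := by
  by_cases huvM : s(u, v) ∈ M.edgeSet
  · cases hu with
    | exposed hu => exact absurd (M.edge_vert huvM) hu
    | matched hw hwu =>
      obtain rfl : _ = v := hM.eq_of_adj_left hwu.symm huvM
      exact hw
  · exact .unmatched hu huv huvM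

/-- An even and an odd alternating walk to the same vertex join into an odd alternating walk
between exposed vertices. -/
theorem not_odd [Finite V] (hM : IsMaxMatching G M) (hC : AvoidsOddCycles M) {v : V}
    (h : AltReach M false v) : ¬ AltReach M true v := by
  intro h'
  obtain ⟨r, w, hr, halt, hw⟩ := h'.exists_walk
  obtain ⟨r', w', hr', halt', hw'⟩ := h.exists_walk
  refine hM.no_odd_alternating_walk hC (w.append w'.reverse) ?_ ?_ hr hr'
  · simp_all [Nat.odd_add]
  · rw [Walk.edges_append, Walk.edges_reverse]
    refine List.isChain_append.2 ⟨halt, halt'.reverse, fun x hx y hy => ?_⟩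
    rw [List.head?_reverse] at hy
    rw [halt.getLast_mem_iff_even hr hx, halt'.getLast_mem_iff_even hr' hy,
      ← Nat.not_odd_iff_even, ← Nat.not_odd_iff_even]
    simp_all

end AltReach

/-- `S` consists of the even vertices and one colour class of the bipartite graph left unreached
by alternating walks; it is independent and every matching edge has exactly one end outside it. -/
theorem IsMaxMatching.exists_isIndep_ncard_add_eq {G : SimpleGraph V} [Finite V]
    {M : G.Subgraph} (hM : IsMaxMatching G M) (hC : AvoidsOddCycles M)
    (hmeet : ∀ ⦃u : V⦄ (c : G.Walk u u), c.IsCycle → Odd c.length →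
      ∃ v ∈ c.support, AltReach M false v) :
    ∃ S : Set V, IsIndep G S ∧ S.ncard + M.edgeSet.ncard = Nat.card V := by
  classical
  set U : Set V := {v | ¬ AltReach M false v ∧ ¬ AltReach M true v}
  obtain ⟨col⟩ := colorable_two_induce_of_forall_isCycle (U := U) fun _ c hc hodd =>
    let ⟨v, hv, hev⟩ := hmeet c hc hodd
    ⟨v, hv, fun hvU => hvU.1 hev⟩
  let c : V → Fin 2 := fun v => if h : v ∈ U then col ⟨v, h⟩ else 0
  have hc : ∀ ⦃x y⦄, x ∈ U → y ∈ U → G.Adj x y → c x ≠ c y := fun x y hx hy hxy => by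
    simpa [c, hx, hy] using col.valid (v := ⟨x, hx⟩) (w := ⟨y, hy⟩) hxy
  set S : Set V := {v | AltReach M false v ∨ (v ∈ U ∧ c v = 0)}
  have hoddS : ∀ ⦃v⦄, AltReach M true v → v ∉ S := fun v hv hvS =>
    hvS.elim (fun h => h.not_odd hM hC hv) fun h => h.1.2 hv
  have hU : ∀ ⦃x y⦄, M.Adj x y → x ∈ U → y ∈ U := fun x y hxy hx =>
    ⟨fun hy => hx.2 (hy.odd_of_adj hM.1 (M.adj_sub hxy.symm)), fun hy => hx.1 (hy.matched hxy.symm)⟩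
  have hind : IsIndep G S := by
    rintro x (hx | hx) y (hy | hy) hxy
    · exact hoddS (hx.odd_of_adj hM.1 hxy) (.inl hy)
    · exact hoddS (hx.odd_of_adj hM.1 hxy) (.inr hy)
    · exact hoddS (hy.odd_of_adj hM.1 hxy.symm) (.inr hx)
    · exact hc hx.1 hy.1 hxy (hx.2.trans hy.2.symm)
  have hcompl : M.edgeSet.ncard = Sᶜ.ncard := by
    refine hM.1.ncard_edgeSet_eq (fun v hv => by_contra fun h => hv (.inl (.exposed h)))
      fun x y hxy => ?_
    simp only [Set.mem_compl_iff, not_not]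
    by_cases hx : AltReach M false x
    · exact iff_of_false (not_not.2 (.inl hx)) (hoddS (hx.odd_of_adj hM.1 (M.adj_sub hxy)))
    by_cases hx' : AltReach M true x
    · exact iff_of_true (hoddS hx') (.inl (hx'.matched hxy))
    have hxU : x ∈ U := ⟨hx, hx'⟩
    have hyU := hU hxy hxU
    have hne := hc hxU hyU (M.adj_sub hxy)
    simp only [S, Set.mem_ofPred_eq, hx, hyU.1, hxU, hyU, true_and, false_or]
    omega
  exact ⟨S, hind, by rw [hcompl, Set.ncard_add_ncard_compl]⟩

section numbers

variable {G : SimpleGraph V}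

theorem IsMaxMatching.matchNum_eq {M : G.Subgraph} (hM : IsMaxMatching G M) :
    matchNum G = M.edgeSet.ncard := by
  unfold matchNum
  exact IsGreatest.csSup_eq ⟨⟨M, hM.1, rfl⟩, by rintro _ ⟨N, hN, rfl⟩; exact hM.2 N hN⟩

theorem IsMaxIndep.indepNum_eq {S : Set V} (hS : IsMaxIndep G S) :
    _root_.indepNum G = S.ncard := by
  unfold _root_.indepNum
  exact IsGreatest.csSup_eq ⟨⟨S, hS.1, rfl⟩, by rintro _ ⟨T, hT, rfl⟩; exact hS.2 T hT⟩

variable [Finite V]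

theorem exists_isMaxMatching (G : SimpleGraph V) : ∃ M : G.Subgraph, IsMaxMatching G M := by
  set sizes := {n | ∃ M : G.Subgraph, M.IsMatching ∧ M.edgeSet.ncard = n}
  have hbdd : BddAbove sizes :=
    ⟨Nat.card (Sym2 V), by rintro _ ⟨M, -, rfl⟩; exact Set.ncard_le_card _⟩
  obtain ⟨M, hM, hMn⟩ := Nat.sSup_mem (s := sizes) ⟨0, ⊥, fun _ hv => hv.elim, by simp⟩ hbdd
  exact ⟨M, hM, fun N hN => hMn ▸ le_csSup hbdd ⟨N, hN, rfl⟩⟩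

theorem exists_isMaxIndep (G : SimpleGraph V) : ∃ S : Set V, IsMaxIndep G S := by
  set sizes := {n | ∃ S : Set V, IsIndep G S ∧ S.ncard = n}
  have hbdd : BddAbove sizes :=
    ⟨Nat.card V, by rintro _ ⟨S, -, rfl⟩; exact Set.ncard_le_card _⟩
  obtain ⟨S, hS, hSn⟩ := Nat.sSup_mem (s := sizes) ⟨0, ∅, fun _ hu => hu.elim, by simp⟩ hbdd
  exact ⟨S, hS, fun T hT => hSn ▸ le_csSup hbdd ⟨T, hT, rfl⟩⟩

theorem indepNum_add_matchNum_le (G : SimpleGraph V) :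
    _root_.indepNum G + matchNum G ≤ Nat.card V := by
  obtain ⟨S, hS⟩ := exists_isMaxIndep G
  obtain ⟨M, hM⟩ := exists_isMaxMatching G
  rw [hS.indepNum_eq, hM.matchNum_eq, ← Set.ncard_add_ncard_compl S]
  refine Nat.add_le_add_left (hM.1.ncard_edgeSet_le fun x y hxy => ?_) _
  by_contra! h
  exact hS.1 (not_not.1 h.1) (not_not.1 h.2) (M.adj_sub hxy)

theorem IsMaxMatching.isKE_of_isIndep {M : G.Subgraph} (hM : IsMaxMatching G M) {S : Set V}
    (hS : IsIndep G S) (h : S.ncard + M.edgeSet.ncard = Nat.card V) : IsKE G := by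
  obtain ⟨T, hT⟩ := exists_isMaxIndep G
  refine (indepNum_add_matchNum_le G).antisymm ?_
  rw [hT.indepNum_eq, hM.matchNum_eq, ← h]
  exact Nat.add_le_add_right (hT.2 S hS) _

end numbers

/-- Induction on `|M ∆ N|`: exchanging the `N`-edge at the `M`-partner of `v` for the `M`-edge
at `v` moves the exposed vertex two steps along an alternating path. -/
theorem IsMaxMatching.altReach_of_not_mem_verts {G : SimpleGraph V} [Finite V]
    {M N : G.Subgraph} (hM : IsMaxMatching G M) (hN : IsMaxMatching G N) {v : V}
    (hv : v ∉ N.verts) : AltReach M false v := by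
  induction hn : (symmDiff M.edgeSet N.edgeSet).ncard using Nat.strong_induction_on
    generalizing N v with
  | _ n ih =>
  by_cases hvM : v ∉ M.verts
  · exact .exposed hvM
  obtain ⟨w, hvw, -⟩ := hM.1 (not_not.1 hvM)
  have hwN : w ∈ N.verts := by_contra fun hw => hN.not_adj hv hw (M.adj_sub hvw)
  obtain ⟨w', hww', -⟩ := hN.1 hwN
  have hw'v : w' ≠ v := fun h => hv (h ▸ N.edge_vert hww'.symm)
  have hvwN : s(v, w) ∉ N.edgeSet := fun h => hv (N.edge_vert h)
  have hww'M : s(w, w') ∉ M.edgeSet := fun h => hw'v (hM.1.eq_of_adj_left h hvw.symm)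
  obtain ⟨N', hN', hN'v, hN'e⟩ := hN.exists_exchange hww' (M.adj_sub hvw) hv
  have hlt : (symmDiff M.edgeSet N'.edgeSet).ncard < n := by
    have hsub : symmDiff M.edgeSet N'.edgeSet ⊆ symmDiff M.edgeSet N.edgeSet \ {s(v, w)} := by
      intro e
      simp only [hN'e, Set.mem_symmDiff, Set.mem_insert_iff, Set.mem_sdiff, Set.mem_singleton_iff]
      have : e = s(w, w') → e ∉ M.edgeSet := fun h => h ▸ hww'M
      have : e = s(v, w) → e ∈ M.edgeSet := fun h => h ▸ hvw
      tauto
    rw [← hn]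
    exact (Set.ncard_le_ncard hsub).trans_lt
      (Set.ncard_sdiff_singleton_lt_of_mem (Set.mem_symmDiff.2 (.inl ⟨hvw, hvwN⟩)))
  have hw' : AltReach M false w' := ih _ hlt hN' (by simp [hN'v, hw'v]) rfl
  have hw'wM : s(w', w) ∉ M.edgeSet := by rwa [Sym2.eq_swap]
  exact (hw'.unmatched (N.adj_sub hww'.symm) hw'wM).matched hvw.symm

theorem not_odd_isCycle_deleteIncidenceSet {G : SimpleGraph V} {v : V}
    (hv : ∀ ⦃u : V⦄ (c : G.Walk u u), c.IsCycle → Odd c.length → v ∈ c.support) {u : V}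
    (c : (G.deleteIncidenceSet v).Walk u u) (hc : c.IsCycle) : ¬ Odd c.length := by
  classical
  intro hodd
  have hvc : v ∈ c.support := by
    simpa using hv (c.mapLe (G.deleteIncidenceSet_le v)) (hc.mapLe _) (by simpa using hodd)
  cases h : c.rotate v hvc with
  | nil => exact (hc.rotate hvc).ne_nil h
  | cons hvx _ => exact (deleteIncidenceSet_adj.1 hvx).2.1 rfl

/-- Deleting the edges at `v` destroys every odd cycle; König's theorem for the resulting graph
and the deficiency `α(G) + μ(G) < |V|` then leave a maximum matching of `G` missing `v`. -/
theorem mem_DSet_of_not_isKE {G : SimpleGraph V} [Finite V] (hke : ¬ IsKE G) {v : V}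
    (hv : ∀ ⦃u : V⦄ (c : G.Walk u u), c.IsCycle → Odd c.length → v ∈ c.support) :
    v ∈ DSet G := by
  have hHG := G.deleteIncidenceSet_le v
  obtain ⟨N, hN⟩ := exists_isMaxMatching (G.deleteIncidenceSet v)
  obtain ⟨S, hS, hSN⟩ := hN.exists_isIndep_ncard_add_eq
    (fun _ c hc hodd => absurd hodd (not_odd_isCycle_deleteIncidenceSet hv c hc))
    (fun _ c hc hodd => absurd hodd (not_odd_isCycle_deleteIncidenceSet hv c hc))
  have hS' : IsIndep G (S \ {v}) := fun x hx y hy hxy =>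
    hS hx.1 hy.1 (deleteIncidenceSet_adj.2 ⟨hxy, hx.2, hy.2⟩)
  have hNG : (N.map (Hom.ofLE hHG)).edgeSet.ncard = N.edgeSet.ncard := by
    simp [Subgraph.edgeSet_map, Hom.coe_ofLE]
  obtain ⟨M, hM⟩ := exists_isMaxMatching G
  have hsize : M.edgeSet.ncard ≤ N.edgeSet.ncard := by
    obtain ⟨T, hT⟩ := exists_isMaxIndep G
    have hle := indepNum_add_matchNum_le G
    unfold IsKE at hke
    rw [hT.indepNum_eq, hM.matchNum_eq] at hle hke
    have := hT.2 _ hS'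
    have := Set.pred_ncard_le_ncard_sdiff_singleton S v
    omega
  refine ⟨N.map (Hom.ofLE hHG), ⟨hN.1.map_ofLE hHG, fun M' hM' => ?_⟩, ?_⟩
  · rw [hNG]
    exact (hM.2 M' hM').trans hsize
  · simp only [Subgraph.map_verts, Hom.coe_ofLE, Set.image_id]
    intro hvN
    obtain ⟨x, hvx, -⟩ := hN.1 hvN
    exact (deleteIncidenceSet_adj.1 (N.adj_sub hvx)).2.1 rfl

theorem AlmostBipartite.mem_support_iff {G : SimpleGraph V} (hab : AlmostBipartite G)
    {C : Set V} (hC : IsOddCycle G C) {u : V} {c : G.Walk u u} (hc : c.IsCycle)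
    (hodd : Odd c.length) (v : V) : v ∈ c.support ↔ v ∈ C := by
  obtain ⟨C₀, -, huniq⟩ := hab
  have : {x | x ∈ c.support} = C :=
    (huniq _ ⟨u, c, hc, hodd, fun _ => Iff.rfl⟩).trans (huniq C hC).symm
  exact Set.ext_iff.1 this v

/-- Every maximum matching of an almost bipartite non-König–Egerváry graph
contains at least one edge of its unique odd cycle. -/
theorem stmt_15 {V : Type u} [Fintype V] (G : SimpleGraph V)
    (hab : AlmostBipartite G) (hke : ¬ IsKE G)
    (M : G.Subgraph) (hM : IsMaxMatching G M) :
    ∀ C : Set V, IsOddCycle G C → ∃ e ∈ M.edgeSet, ∀ v ∈ e, v ∈ C := by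
  intro C hC
  by_contra! hnone
  have hsupp {u : V} {c : G.Walk u u} (hc : c.IsCycle) (hodd : Odd c.length) :=
    hab.mem_support_iff hC hc hodd
  have havoid : AvoidsOddCycles M := fun _ c hc hodd e he heM => by
    obtain ⟨v, hve, hvC⟩ := hnone e heM
    exact hvC ((hsupp hc hodd v).1 (Walk.mem_support_of_mem_edges he hve))
  obtain ⟨u, w, hw, hwodd, -⟩ := hC
  have hu : u ∈ C := (hsupp hw hwodd u).1 w.start_mem_support
  obtain ⟨N, hN, huN⟩ := mem_DSet_of_not_isKE hke fun _ _ hc hodd => (hsupp hc hodd u).2 hu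
  have heven : AltReach M false u := hM.altReach_of_not_mem_verts hN huN
  obtain ⟨S, hS, hcard⟩ := hM.exists_isIndep_ncard_add_eq havoid
    fun _ _ hc hodd => ⟨u, (hsupp hc hodd u).2 hu, heven⟩
  exact hke (hM.isKE_of_isIndep hS hcard)
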